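/- Let M be a Kobayashi non-degenerate complex manifold and f : M → ℂ̂ meromorphic. If for every sequence (φ_j) of holomorphic maps φ_j : 𝔻 → M the family {f ∘ φ_j} is normal, then f is a normal function on M. -/

import Mathlib

open Metric Set Filter

noncomputable section

/-- The unit disk in ℂ. -/
def unitDisk : Set ℂ := Metric.ball 0 1

variable {E : Type*} [NormedAddCommGroup E] [NormedSpace ℂ E]

/-- An analytic disk in `M`: a holomorphic map from the unit disk into `M`. -/
def AnalyticDiskIn (M : Set E) (φ : ℂ → E) : Prop :=
  DifferentiableOn ℂ φ unitDisk ∧ Set.MapsTo φ unitDisk M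

/-- The infinitesimal Kobayashi–Royden pseudometric. -/
def kobayashi (M : Set E) (z ξ : E) : ℝ :=
  sInf { r : ℝ | ∃ (φ : ℂ → E) (a : ℂ), AnalyticDiskIn M φ ∧ φ 0 = z ∧
    deriv φ 0 = a • ξ ∧ a ≠ 0 ∧ r = 1 / ‖a‖ }

/-- The infinitesimal spherical metric `χ(w, ξ) = 2|ξ|/(1+|w|²)`. -/
def sphMetric (w ξ : ℂ) : ℝ := 2 * ‖ξ‖ / (1 + ‖w‖ ^ 2)

/-- `g` is a normal function on `M`. -/
def NormalOn (M : Set E) (g : E → ℂ) : Prop :=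
  ∃ C : ℝ, ∀ z ∈ M, ∀ ξ : E, sphMetric (g z) (fderiv ℂ g z ξ) ≤ C * kobayashi M z ξ

/-- `f` is a Bloch function on `M`. -/
def BlochOn (M : Set E) (f : E → ℂ) : Prop :=
  ∃ C : ℝ, ∀ z ∈ M, ∀ ξ : E, ‖fderiv ℂ f z ξ‖ ≤ C * kobayashi M z ξ

/-- `f` is semi-Bloch on `M`: `exp (λ f)` is normal for every `λ ∈ ℂ`. -/
def SemiBloch (M : Set E) (f : E → ℂ) : Prop :=
  ∀ lam : ℂ, NormalOn M (fun z => Complex.exp (lam * f z))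

/-- `M` is infinitesimally Kobayashi non-degenerate. -/
def KobayashiNondegenerate (M : Set E) : Prop :=
  ∀ z ∈ M, ∀ ξ : E, ξ ≠ 0 → 0 < kobayashi M z ξ

/-- `D(w₀, r)` is a schlicht disk in the range of `f`. -/
def SchlichtRadius (M : Set E) (f : E → ℂ) (w₀ : ℂ) (r : ℝ) : Prop :=
  ∃ h : ℂ → E, DifferentiableOn ℂ h unitDisk ∧ Set.MapsTo h unitDisk M ∧
    DifferentiableOn ℂ (f ∘ h) unitDisk ∧ Set.BijOn (f ∘ h) unitDisk (Metric.ball w₀ r)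

/-- A (real-affine) line in the complex plane. -/
def IsLine (L : Set ℂ) : Prop :=
  ∃ a b : ℂ, b ≠ 0 ∧ L = {z : ℂ | ∃ t : ℝ, z = a + t * b}

/-- The chordal (spherical) distance on ℂ ⊂ ℂ̂. -/
def chordal (w z : ℂ) : ℝ :=
  2 * dist w z / (Real.sqrt (1 + ‖w‖ ^ 2) * Real.sqrt (1 + ‖z‖ ^ 2))

/-- A sequence of functions on the unit disk is a normal family with respect to the
spherical metric: every subsequence has a further subsequence converging locally
uniformly on the disk, either spherically to a function or uniformly to `∞` on compacta. -/
def SphNormalFamily (g : ℕ → ℂ → ℂ) : Prop :=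
  ∀ s : ℕ → ℕ, ∃ t : ℕ → ℕ, StrictMono t ∧
    ((∃ h : ℂ → ℂ, ∀ K ⊆ unitDisk, IsCompact K → ∀ ε > 0,
        ∀ᶠ j in Filter.atTop, ∀ x ∈ K, chordal (g (s (t j)) x) (h x) < ε) ∨
      (∀ K ⊆ unitDisk, IsCompact K → ∀ C : ℝ,
        ∀ᶠ j in Filter.atTop, ∀ x ∈ K, C ≤ ‖g (s (t j)) x‖))

/-! If every family `f ∘ φⱼ` is normal, the spherical derivative `(f ∘ φ)^#(0)` is bounded by
some `C` uniformly over all analytic disks `φ`: a sequence of disks along which it blows up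
would contradict the easy half of Marty's theorem, which bounds spherical derivatives of a
normal family at the origin. For a disk with `φ 0 = z` and `φ'(0) = a • ξ` the chain rule gives
`(f ∘ φ)^#(0) = ‖a‖ χ(f z, f'(z) ξ)`, so `χ(f z, f'(z) ξ) ≤ C / ‖a‖`, and the infimum of
`1 / ‖a‖` over such disks is `k_M(z, ξ)`. -/

/-- Inverse stereographic projection of `ℂ` onto the unit sphere of `ℝ³`. -/
def sphEmb (w : ℂ) : EuclideanSpace ℝ (Fin 3) :=
  WithLp.toLp 2 ![2 * w.re / (1 + ‖w‖ ^ 2), 2 * w.im / (1 + ‖w‖ ^ 2),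
    (‖w‖ ^ 2 - 1) / (1 + ‖w‖ ^ 2)]

lemma dist_sphEmb (w z : ℂ) : dist (sphEmb w) (sphEmb z) = chordal w z := by
  rw [EuclideanSpace.dist_eq, chordal, Complex.dist_eq_re_im]
  simp only [sphEmb, PiLp.toLp_apply, Fin.sum_univ_three, Matrix.cons_val_zero,
    Matrix.cons_val_one, Matrix.head_cons, Matrix.cons_val_two, Matrix.tail_cons, Real.dist_eq,
    sq_abs, Complex.sq_norm, Complex.normSq_apply]
  set a := w.re; set b := w.im; set c := z.re; set d := z.im
  have hp : (0 : ℝ) < 1 + (a * a + b * b) := by nlinarith [mul_self_nonneg a, mul_self_nonneg b]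
  have hq : (0 : ℝ) < 1 + (c * c + d * d) := by nlinarith [mul_self_nonneg c, mul_self_nonneg d]
  have key : (2 * a / (1 + (a * a + b * b)) - 2 * c / (1 + (c * c + d * d))) ^ 2 +
      (2 * b / (1 + (a * a + b * b)) - 2 * d / (1 + (c * c + d * d))) ^ 2 +
      ((a * a + b * b - 1) / (1 + (a * a + b * b)) -
        (c * c + d * d - 1) / (1 + (c * c + d * d))) ^ 2 =
      2 ^ 2 * ((a - c) ^ 2 + (b - d) ^ 2) / ((1 + (a * a + b * b)) * (1 + (c * c + d * d))) := by
    field_simp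
    ring
  rw [key, Real.sqrt_div (by positivity), Real.sqrt_mul (by positivity), Real.sqrt_mul hp.le,
    Real.sqrt_sq zero_le_two]

lemma chordal_triangle (w₁ w₂ w₃ : ℂ) : chordal w₁ w₃ ≤ chordal w₁ w₂ + chordal w₂ w₃ := by
  simpa only [dist_sphEmb] using dist_triangle (sphEmb w₁) (sphEmb w₂) (sphEmb w₃)

lemma chordal_comm (w z : ℂ) : chordal w z = chordal z w := by
  simpa only [dist_sphEmb] using dist_comm (sphEmb w) (sphEmb z)

lemma one_le_sqrt_one_add_sq (x : ℝ) : 1 ≤ Real.sqrt (1 + x ^ 2) :=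
  Real.one_le_sqrt.mpr (by nlinarith [sq_nonneg x])

lemma chordal_le_two_mul_dist (w z : ℂ) : chordal w z ≤ 2 * dist w z :=
  div_le_self (by positivity)
    (one_le_mul_of_one_le_of_one_le (one_le_sqrt_one_add_sq _) (one_le_sqrt_one_add_sq _))

/-- `1 / √(1 + ‖z‖²)` is half the chordal distance from `z` to `∞`. -/
lemma norm_le_of_chordal_lt {w z : ℂ} (h : chordal w z < 1 / Real.sqrt (1 + ‖z‖ ^ 2)) :
    ‖w‖ ≤ 2 * ‖z‖ + 1 := by
  by_contra! hw
  have hd : (1 + ‖w‖) / 2 ≤ dist w z := by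
    linarith [norm_sub_norm_le w z, dist_eq_norm w z]
  have hsw : Real.sqrt (1 + ‖w‖ ^ 2) ≤ 1 + ‖w‖ :=
    Real.sqrt_le_iff.mpr ⟨by positivity, by nlinarith [norm_nonneg w]⟩
  have hsz : 0 < Real.sqrt (1 + ‖z‖ ^ 2) := Real.sqrt_pos.mpr (by positivity)
  refine h.not_ge ?_
  calc 1 / Real.sqrt (1 + ‖z‖ ^ 2)
      = (1 + ‖w‖) / ((1 + ‖w‖) * Real.sqrt (1 + ‖z‖ ^ 2)) := by
        rw [div_mul_eq_div_div, div_self (by positivity)]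
    _ ≤ 2 * dist w z / (Real.sqrt (1 + ‖w‖ ^ 2) * Real.sqrt (1 + ‖z‖ ^ 2)) := by
        gcongr
        linarith
    _ = chordal w z := rfl

lemma exists_eventually_norm_le_of_chordal_tendsto {g : ℕ → ℂ → ℂ} {h : ℂ → ℂ} {c : ℂ}
    {r : ℝ} (hr : 0 < r) (hg : ∀ j, ContinuousAt (g j) c)
    (H : ∀ ε > 0, ∀ᶠ j in atTop, ∀ x ∈ closedBall c r, chordal (g j x) (h x) < ε) :
    ∃ ρ, 0 < ρ ∧ ρ ≤ r ∧ ∃ B, ∀ᶠ j in atTop, ∀ x ∈ closedBall c ρ, ‖g j x‖ ≤ B := by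
  set τ := 1 / Real.sqrt (1 + ‖h c‖ ^ 2)
  have hτ : 0 < τ := by positivity
  obtain ⟨N, hN⟩ := eventually_atTop.mp (H (τ / 4) (by positivity))
  obtain ⟨δ, hδ, hcont⟩ := Metric.continuousAt_iff.mp (hg N) (τ / 8) (by positivity)
  refine ⟨min (δ / 2) r, by positivity, min_le_right _ _, 2 * ‖h c‖ + 1,
    eventually_atTop.mpr ⟨N, fun j hj x hx => norm_le_of_chordal_lt ?_⟩⟩
  have hxr : x ∈ closedBall c r := closedBall_subset_closedBall (min_le_right _ _) hx
  have hxc : dist x c < δ := (mem_closedBall.mp hx).trans_lt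
    ((min_le_left _ _).trans_lt (half_lt_self hδ))
  have hc : c ∈ closedBall c r := mem_closedBall_self hr.le
  have e₁ := hN j hj x hxr
  have e₂ := hN N le_rfl x hxr
  have e₃ := (chordal_le_two_mul_dist (g N x) (g N c)).trans_lt
    (mul_lt_mul_of_pos_left (hcont hxc) two_pos)
  have e₄ := hN N le_rfl c hc
  rw [chordal_comm] at e₂
  linarith [chordal_triangle (g j x) (h x) (h c), chordal_triangle (h x) (g N x) (h c),
    chordal_triangle (g N x) (g N c) (h c)]

lemma sphMetric_le_two_mul_norm (w ξ : ℂ) : sphMetric w ξ ≤ 2 * ‖ξ‖ :=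
  div_le_self (by positivity) (by nlinarith [sq_nonneg ‖w‖])

lemma sphMetric_smul (w a ξ : ℂ) : sphMetric w (a • ξ) = ‖a‖ * sphMetric w ξ := by
  simp only [sphMetric, norm_smul]
  ring

lemma sphMetric_inv {w : ℂ} (hw : w ≠ 0) (ξ : ℂ) :
    sphMetric w⁻¹ (-ξ / w ^ 2) = sphMetric w ξ := by
  have hw' : ‖w‖ ≠ 0 := norm_ne_zero_iff.mpr hw
  simp only [sphMetric, norm_div, norm_neg, norm_pow, norm_inv]
  field_simp
  ring

lemma sphMetric_deriv_le_of_forall_mem_sphere_norm_le {g : ℂ → ℂ} {c : ℂ} {ρ B : ℝ}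
    (hρ : 0 < ρ) (hg : DifferentiableOn ℂ g (closedBall c ρ))
    (hB : ∀ x ∈ sphere c ρ, ‖g x‖ ≤ B) : sphMetric (g c) (deriv g c) ≤ 2 * B / ρ := by
  have hcauchy := Complex.norm_deriv_le_of_forall_mem_sphere_norm_le hρ
    (hg.diffContOnCl_ball subset_rfl) hB
  rw [mul_div_assoc]
  linarith [sphMetric_le_two_mul_norm (g c) (deriv g c)]

/-- Cauchy's estimate applied to `1 / g`, using that `w ↦ w⁻¹` is an isometry of the spherical
metric. -/
lemma sphMetric_deriv_le_of_forall_mem_closedBall_one_le_norm {g : ℂ → ℂ} {c : ℂ} {ρ : ℝ}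
    (hρ : 0 < ρ) (hg : DifferentiableOn ℂ g (closedBall c ρ))
    (h1 : ∀ x ∈ closedBall c ρ, 1 ≤ ‖g x‖) : sphMetric (g c) (deriv g c) ≤ 2 / ρ := by
  have hne : ∀ x ∈ closedBall c ρ, g x ≠ 0 := fun x hx h0 =>
    absurd (h1 x hx) (by simp [h0])
  have hc : c ∈ closedBall c ρ := mem_closedBall_self hρ.le
  have hderiv : deriv (fun x => (g x)⁻¹) c = -deriv g c / g c ^ 2 :=
    deriv_inv'' (hg.differentiableAt (closedBall_mem_nhds c hρ)) (hne c hc)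
  calc sphMetric (g c) (deriv g c)
      = sphMetric (g c)⁻¹ (deriv (fun x => (g x)⁻¹) c) := by
        rw [hderiv, sphMetric_inv (hne c hc)]
    _ ≤ 2 * 1 / ρ := sphMetric_deriv_le_of_forall_mem_sphere_norm_le hρ (hg.inv hne)
        fun x hx => by
          rw [norm_inv]
          exact inv_le_one_of_one_le₀ (h1 x (sphere_subset_closedBall hx))
    _ = 2 / ρ := by ring

lemma eventually_sphMetric_deriv_le_of_chordal_tendsto {g : ℕ → ℂ → ℂ} {h : ℂ → ℂ}
    (hg : ∀ j, DifferentiableOn ℂ (g j) unitDisk)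
    (H : ∀ ε > 0, ∀ᶠ j in atTop, ∀ x ∈ closedBall (0 : ℂ) (1 / 2), chordal (g j x) (h x) < ε) :
    ∃ C, ∀ᶠ j in atTop, sphMetric (g j 0) (deriv (g j) 0) ≤ C := by
  obtain ⟨ρ, hρ, hρr, B, hB⟩ := exists_eventually_norm_le_of_chordal_tendsto (by norm_num)
    (fun j => (hg j).continuousOn.continuousAt (isOpen_ball.mem_nhds (mem_ball_self one_pos))) H
  have hsub : closedBall (0 : ℂ) ρ ⊆ unitDisk := closedBall_subset_ball (by linarith)
  exact ⟨2 * B / ρ, hB.mono fun j hj => sphMetric_deriv_le_of_forall_mem_sphere_norm_le hρ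
    ((hg j).mono hsub) fun x hx => hj x (sphere_subset_closedBall hx)⟩

/-- The easy half of Marty's theorem, at the origin. -/
lemma SphNormalFamily.exists_forall_sphMetric_deriv_le {g : ℕ → ℂ → ℂ}
    (hN : SphNormalFamily g) (hg : ∀ j, DifferentiableOn ℂ (g j) unitDisk) :
    ∃ C, ∀ j, sphMetric (g j 0) (deriv (g j) 0) ≤ C := by
  by_contra! hunbounded
  choose s hs using fun n : ℕ => hunbounded n
  obtain ⟨t, ht, hlim⟩ := hN s
  have hK : closedBall (0 : ℂ) (1 / 2) ⊆ unitDisk := closedBall_subset_ball (by norm_num)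
  have hKc : IsCompact (closedBall (0 : ℂ) (1 / 2)) := isCompact_closedBall _ _
  obtain ⟨C, hC⟩ : ∃ C, ∀ᶠ n in atTop,
      sphMetric (g (s (t n)) 0) (deriv (g (s (t n))) 0) ≤ C := by
    rcases hlim with ⟨h, hconv⟩ | hinf
    · exact eventually_sphMetric_deriv_le_of_chordal_tendsto (fun n => hg _)
        fun ε hε => hconv _ hK hKc ε hε
    · exact ⟨2 / (1 / 2), (hinf _ hK hKc 1).mono fun n hn =>
        sphMetric_deriv_le_of_forall_mem_closedBall_one_le_norm (by norm_num) ((hg _).mono hK) hn⟩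
  obtain ⟨n, hnC, hn⟩ := (hC.and (eventually_ge_atTop ⌈C⌉₊)).exists
  have htn : (n : ℝ) ≤ t n := Nat.cast_le.mpr ht.le_apply
  have hCn : C ≤ n := (Nat.le_ceil C).trans (Nat.cast_le.mpr hn)
  linarith [hs (t n)]

lemma AnalyticDiskIn.differentiableAt_zero {M : Set E} {φ : ℂ → E} (hφ : AnalyticDiskIn M φ) :
    DifferentiableAt ℂ φ 0 :=
  hφ.1.differentiableAt (isOpen_ball.mem_nhds (mem_ball_self one_pos))

lemma exists_forall_sphMetric_deriv_comp_le {M : Set E} {f : E → ℂ}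
    (hf : DifferentiableOn ℂ f M)
    (h : ∀ φ : ℕ → ℂ → E, (∀ j, AnalyticDiskIn M (φ j)) →
      SphNormalFamily (fun j => f ∘ φ j)) :
    ∃ C, 0 < C ∧ ∀ φ, AnalyticDiskIn M φ → sphMetric (f (φ 0)) (deriv (f ∘ φ) 0) ≤ C := by
  by_contra! hunbounded
  choose φ hφ hlt using fun n : ℕ => hunbounded (n + 1) (by positivity)
  obtain ⟨C, hC⟩ := (h φ hφ).exists_forall_sphMetric_deriv_le
    fun j => hf.comp (hφ j).1 (hφ j).2
  simp only [Function.comp_apply] at hC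
  linarith [hlt ⌈C⌉₊, hC ⌈C⌉₊, Nat.le_ceil C]

lemma exists_analyticDiskIn_deriv_eq_smul {M : Set E} (hM : IsOpen M) {z : E} (hz : z ∈ M)
    (ξ : E) : ∃ (φ : ℂ → E) (a : ℂ), AnalyticDiskIn M φ ∧ φ 0 = z ∧ deriv φ 0 = a • ξ ∧ a ≠ 0 := by
  obtain ⟨r, hr, hball⟩ := Metric.isOpen_iff.mp hM z hz
  set a : ℂ := ((r / (‖ξ‖ + 1) : ℝ) : ℂ)
  have ha : ‖a‖ = r / (‖ξ‖ + 1) := by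
    rw [Complex.norm_real, Real.norm_of_nonneg (by positivity)]
  have hφ : ∀ t : ℂ, HasDerivAt (fun t : ℂ => z + t • a • ξ) (a • ξ) t := fun t => by
    simpa using ((hasDerivAt_id t).smul_const (a • ξ)).const_add z
  refine ⟨fun t => z + t • a • ξ, a, ⟨fun t _ => (hφ t).differentiableAt.differentiableWithinAt,
    fun t ht => hball ?_⟩, by simp, (hφ 0).deriv, by rw [← norm_ne_zero_iff, ha]; positivity⟩
  have ht : ‖t‖ < 1 := by simpa [unitDisk] using ht
  have hξ : ‖ξ‖ / (‖ξ‖ + 1) < 1 := (div_lt_one (by positivity)).mpr (lt_add_one _)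
  rw [mem_ball, dist_eq_norm, add_sub_cancel_left, norm_smul, norm_smul, ha]
  calc ‖t‖ * (r / (‖ξ‖ + 1) * ‖ξ‖) = ‖t‖ * (r * (‖ξ‖ / (‖ξ‖ + 1))) := by ring
    _ < 1 * (r * 1) := by gcongr
    _ = r := by ring

/-- Openness of `M` supplies a competitor disk, so the infimum is not the junk value
`sInf ∅ = 0`. -/
lemma le_mul_kobayashi {M : Set E} (hM : IsOpen M) {z : E} (hz : z ∈ M) {ξ : E} {s C : ℝ}
    (hC : 0 < C) (hs : ∀ (φ : ℂ → E) (a : ℂ), AnalyticDiskIn M φ → φ 0 = z →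
      deriv φ 0 = a • ξ → a ≠ 0 → ‖a‖ * s ≤ C) :
    s ≤ C * kobayashi M z ξ := by
  rw [← div_le_iff₀' hC]
  obtain ⟨φ, a, hφ, h0, hd, ha⟩ := exists_analyticDiskIn_deriv_eq_smul hM hz ξ
  refine le_csInf ⟨_, φ, a, hφ, h0, hd, ha, rfl⟩ ?_
  rintro _ ⟨φ, a, hφ, h0, hd, ha, rfl⟩
  rw [div_le_div_iff₀ hC (norm_pos_iff.mpr ha)]
  linarith [hs φ a hφ h0 hd ha]

theorem normal_family_implies_normal_general (M : Set E) (hM : IsOpen M)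
    (f : E → ℂ) (hf : DifferentiableOn ℂ f M)
    (h : ∀ φ : ℕ → ℂ → E, (∀ j, AnalyticDiskIn M (φ j)) →
      SphNormalFamily (fun j => f ∘ φ j)) :
    NormalOn M f := by
  obtain ⟨C, hC, hbound⟩ := exists_forall_sphMetric_deriv_comp_le hf h
  refine ⟨C, fun z hz ξ => le_mul_kobayashi hM hz hC fun φ a hφ h0 hd _ => ?_⟩
  have hfz : DifferentiableAt ℂ f (φ 0) := hf.differentiableAt (hM.mem_nhds (h0 ▸ hz))
  calc ‖a‖ * sphMetric (f z) (fderiv ℂ f z ξ)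
      = sphMetric (f (φ 0)) (deriv (f ∘ φ) 0) := by
        rw [fderiv_comp_deriv 0 hfz hφ.differentiableAt_zero, h0, hd, map_smul, sphMetric_smul]
    _ ≤ C := hbound φ hφ

/-- Converse of the Cima–Krantz characterisation: if `{f ∘ φ_j}` is a normal family
for every sequence of analytic disks `φ_j` in a Kobayashi non-degenerate `M`,
then `f` is normal. -/
theorem normal_family_implies_normal (M : Set E) (hM : IsOpen M)
    (hk : KobayashiNondegenerate M) (f : E → ℂ) (hf : DifferentiableOn ℂ f M)
    (h : ∀ φ : ℕ → ℂ → E, (∀ j, AnalyticDiskIn M (φ j)) →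
      SphNormalFamily (fun j => f ∘ φ j)) :
    NormalOn M f :=
  normal_family_implies_normal_general M hM f hf h

end
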